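/- Let λ ≠ 0 and let γ be the standard Gaussian measure on ℝ (mean 0, variance 1). Then the pushforward of γ under the map x ↦ x²/(λ² + x²) is the measure on (0,1) with density f_{Z^λ}: for every Borel set S ⊆ ℝ, γ({ x : x²/(λ² + x²) ∈ S }) = ∫_{S ∩ (0,1)} (|λ| / √(2π t (1−t)³)) · exp(−λ² t / (2(1−t))) dt. -/

import Mathlib

/-!
Write `g x = x² / (λ² + x²)` and `φ` for the standard Gaussian density. Both `g` and `φ` are even,
so `γ (g⁻¹ S) = 2 ∫_{g⁻¹ S ∩ (0,∞)} φ`. On `(0,∞)` the map `g` is a strictly increasing bijection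
onto `(0,1)`, and the substitution `t = g x` turns this integral into `∫_{S ∩ (0,1)} f_{Z^λ}`,
because `|g' x| · f_{Z^λ} (g x) = 2 φ x` for `x > 0`.
-/

open MeasureTheory ProbabilityTheory Real Set

theorem setIntegral_eq_two_smul_setIntegral_Ioi_of_even {E : Type*} [NormedAddCommGroup E]
    [NormedSpace ℝ E] {f : ℝ → E} (hf : ∀ x, f (-x) = f x) {A : Set ℝ} (hA : MeasurableSet A)
    (hA_neg : -A = A) (hfA : IntegrableOn f A) :
    ∫ x in A, f x = (2 : ℝ) • ∫ x in A ∩ Ioi 0, f x := by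
  have h_neg : ∫ x in A ∩ Iio 0, f x = ∫ x in A ∩ Ioi 0, f x := by
    have h_pre : Neg.neg ⁻¹' (A ∩ Ioi 0) = A ∩ Iio 0 := by
      rw [Set.neg_preimage, inter_neg, hA_neg, neg_Ioi, neg_zero]
    simpa only [h_pre, hf] using (Measure.measurePreserving_neg volume).setIntegral_preimage_emb
      measurableEmbedding_neg f (A ∩ Ioi 0)
  have h_split : (A ∩ Iio 0 ∪ A ∩ Ioi 0 : Set ℝ) =ᵐ[volume] A := by
    rw [← inter_union_distrib_left, Iio_union_Ioi, ← sdiff_eq]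
    exact sdiff_null_ae_eq_self (measure_singleton 0)
  rw [← setIntegral_congr_set h_split, setIntegral_union, h_neg, two_smul]
  · exact disjoint_left.2 fun x hx hx' => lt_asymm (mem_Iio.1 hx.2) (mem_Ioi.1 hx'.2)
  · exact hA.inter measurableSet_Ioi
  · exact hfA.mono_set inter_subset_left
  · exact hfA.mono_set inter_subset_left

noncomputable def zMap (lam x : ℝ) : ℝ := x ^ 2 / (lam ^ 2 + x ^ 2)

noncomputable def zDensity (lam t : ℝ) : ℝ :=
  |lam| / √(2 * π * t * (1 - t) ^ 3) * exp (-(lam ^ 2 * t) / (2 * (1 - t)))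

section

variable {lam : ℝ}

theorem measurable_zMap : Measurable (zMap lam) := by
  unfold zMap; fun_prop

theorem hasDerivAt_zMap (hlam : lam ≠ 0) (x : ℝ) :
    HasDerivAt (zMap lam) (2 * lam ^ 2 * x / (lam ^ 2 + x ^ 2) ^ 2) x := by
  have hd : lam ^ 2 + x ^ 2 ≠ 0 := by positivity
  refine ((hasDerivAt_pow 2 x).fun_div ((hasDerivAt_pow 2 x).const_add (lam ^ 2)) hd).congr_deriv ?_
  field_simp
  ring

theorem one_sub_zMap (hlam : lam ≠ 0) (x : ℝ) : 1 - zMap lam x = lam ^ 2 / (lam ^ 2 + x ^ 2) := by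
  have hd : lam ^ 2 + x ^ 2 ≠ 0 := by positivity
  unfold zMap
  field_simp
  ring

theorem strictMonoOn_zMap (hlam : lam ≠ 0) : StrictMonoOn (zMap lam) (Ici 0) := by
  intro a ha b hb hab
  have h := one_sub_zMap hlam
  have : lam ^ 2 / (lam ^ 2 + b ^ 2) < lam ^ 2 / (lam ^ 2 + a ^ 2) :=
    div_lt_div_of_pos_left (by positivity) (by positivity) (by nlinarith [mem_Ici.1 ha])
  linarith [h a, h b]

theorem zMap_image_Ioi (hlam : lam ≠ 0) : zMap lam '' Ioi 0 = Ioo 0 1 := by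
  ext t
  constructor
  · rintro ⟨x, hx, rfl⟩
    have h1 : 0 < 1 - zMap lam x := by rw [one_sub_zMap hlam]; positivity
    exact ⟨div_pos (pow_pos hx 2) (by positivity), by linarith⟩
  · rintro ⟨ht0, ht1⟩
    have h1t : 0 < 1 - t := by linarith
    refine ⟨|lam| * √(t / (1 - t)), mul_pos (abs_pos.2 hlam) (sqrt_pos.2 (div_pos ht0 h1t)), ?_⟩
    have hsq : (|lam| * √(t / (1 - t))) ^ 2 = lam ^ 2 * (t / (1 - t)) := by
      rw [mul_pow, sq_abs, sq_sqrt (div_pos ht0 h1t).le]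
    unfold zMap
    rw [hsq]
    field_simp
    ring

theorem abs_deriv_zMap_mul_zDensity_zMap (hlam : lam ≠ 0) {x : ℝ} (hx : 0 < x) :
    |2 * lam ^ 2 * x / (lam ^ 2 + x ^ 2) ^ 2| * zDensity lam (zMap lam x) =
      2 * gaussianPDFReal 0 1 x := by
  set d := lam ^ 2 + x ^ 2 with hd
  have hd0 : 0 < d := by positivity
  have h_one_sub := one_sub_zMap hlam x
  rw [← hd] at h_one_sub
  have h_zMap : zMap lam x = x ^ 2 / d := rfl
  have h_sqrt : √(2 * π * zMap lam x * (1 - zMap lam x) ^ 3) =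
      √(2 * π) * (x * |lam| ^ 3 / d ^ 2) := by
    rw [← sqrt_sq (by positivity : 0 ≤ x * |lam| ^ 3 / d ^ 2), ← sqrt_mul (by positivity),
      h_one_sub, h_zMap, ← sq_abs lam]
    ring_nf
  have h_exp : -(lam ^ 2 * zMap lam x) / (2 * (1 - zMap lam x)) = -x ^ 2 / 2 := by
    rw [h_one_sub, h_zMap]
    field_simp
  have h_pdf : gaussianPDFReal 0 1 x = (√(2 * π))⁻¹ * exp (-x ^ 2 / 2) := by
    simp [gaussianPDFReal]
  rw [zDensity, h_sqrt, h_exp, h_pdf, abs_of_pos (by positivity), ← sq_abs lam]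
  field_simp

end

theorem gaussian_pushforward_fZ (lam : ℝ) (hlam : lam ≠ 0) (S : Set ℝ)
    (hS : MeasurableSet S) :
    gaussianReal 0 1 {x : ℝ | x ^ 2 / (lam ^ 2 + x ^ 2) ∈ S} =
      ENNReal.ofReal
        (∫ t in S ∩ Set.Ioo (0 : ℝ) 1,
          |lam| / Real.sqrt (2 * π * t * (1 - t) ^ 3) *
            Real.exp (-(lam ^ 2 * t) / (2 * (1 - t)))) := by
  change gaussianReal 0 1 (zMap lam ⁻¹' S) =
    ENNReal.ofReal (∫ t in S ∩ Ioo 0 1, zDensity lam t)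
  have hA : MeasurableSet (zMap lam ⁻¹' S) := measurable_zMap hS
  have hA_neg : -(zMap lam ⁻¹' S) = zMap lam ⁻¹' S := by
    ext x; simp [zMap]
  rw [gaussianReal_apply_eq_integral 0 one_ne_zero,
    setIntegral_eq_two_smul_setIntegral_Ioi_of_even (fun x => by simp [gaussianPDFReal]) hA hA_neg
      (integrable_gaussianPDFReal 0 1).integrableOn,
    inter_comm S, ← zMap_image_Ioi hlam, ← image_inter_preimage,
    integral_image_eq_integral_abs_deriv_smul (measurableSet_Ioi.inter hA)
      (fun x _ => (hasDerivAt_zMap hlam x).hasDerivWithinAt)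
      ((strictMonoOn_zMap hlam).injOn.mono (inter_subset_left.trans Ioi_subset_Ici_self)),
    inter_comm (zMap lam ⁻¹' S), smul_eq_mul, ← integral_const_mul]
  refine congrArg ENNReal.ofReal (setIntegral_congr_fun (measurableSet_Ioi.inter hA) fun x hx => ?_)
  rw [smul_eq_mul, abs_deriv_zMap_mul_zDensity_zMap hlam hx.1]
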